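/- arXiv:2110.01966 — 2 statements merged into one kernel-verified Lean document; each statement's English description precedes it below -/
import Mathlib

section
/- In the matrix-group setting, the k-th Taylor coefficient of the end-point map is given by the iterated integral formula: b^{(k)}(t) = k! · [∫₀ᵗ ∫₀^{t₁} ⋯ ∫₀^{t_{k−1}} Ad_{g(t_k)}Δu(t_k) · ⋯ · Ad_{g(t₁)}Δu(t₁) dt_k ⋯ dt₁] · g(t). -/
open MeasureTheory

attribute [local instance] Matrix.normedAddCommGroup Matrix.normedSpace

lemma aux_norm_mul {N : ℕ} (A B : Matrix (Fin N) (Fin N) ℝ) :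
    ‖A * B‖ ≤ N * ‖A‖ * ‖B‖ := by
  rw [Matrix.norm_le_iff (by positivity)]
  intro i j
  calc ‖(A * B) i j‖ = ‖∑ k, A i k * B k j‖ := by rw [Matrix.mul_apply]
    _ ≤ ∑ k, ‖A i k * B k j‖ := norm_sum_le _ _
    _ ≤ ∑ _k : Fin N, ‖A‖ * ‖B‖ := by
        refine Finset.sum_le_sum fun k _ => ?_
        rw [norm_mul]
        exact mul_le_mul (Matrix.norm_entry_le_entrywise_sup_norm A)
          (Matrix.norm_entry_le_entrywise_sup_norm B) (norm_nonneg _) (norm_nonneg _)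
    _ = N * ‖A‖ * ‖B‖ := by
        rw [Finset.sum_const, Finset.card_univ, Fintype.card_fin, nsmul_eq_mul]; ring


noncomputable instance aux_clm_nacg (N : ℕ) :
    NormedAddCommGroup (Matrix (Fin N) (Fin N) ℝ →L[ℝ] Matrix (Fin N) (Fin N) ℝ) :=
  ContinuousLinearMap.toNormedAddCommGroup

noncomputable instance aux_clm_ns (N : ℕ) :
    NormedSpace ℝ (Matrix (Fin N) (Fin N) ℝ →L[ℝ] Matrix (Fin N) (Fin N) ℝ) :=
  ContinuousLinearMap.toNormedSpace

lemma aux_hasDerivWithinAt_mul {N : ℕ} {f h : ℝ → Matrix (Fin N) (Fin N) ℝ}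
    {f' h' : Matrix (Fin N) (Fin N) ℝ} {s : Set ℝ} {x : ℝ}
    (hf : HasDerivWithinAt f f' s x) (hh : HasDerivWithinAt h h' s x) :
    HasDerivWithinAt (fun y => f y * h y) (f' * h x + f x * h') s x := by
  let M : Matrix (Fin N) (Fin N) ℝ →L[ℝ] Matrix (Fin N) (Fin N) ℝ →L[ℝ]
      Matrix (Fin N) (Fin N) ℝ :=
    LinearMap.mkContinuous₂ (LinearMap.mul ℝ (Matrix (Fin N) (Fin N) ℝ)) N
      (fun A B => aux_norm_mul A B)
  have h1 : HasDerivWithinAt (fun y => M (f y)) (M f') s x :=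
    M.hasFDerivAt.comp_hasDerivWithinAt x hf
  have h2 := h1.clm_apply hh
  convert h2 using 1
  all_goals rfl

instance aux_pms (N : ℕ) : TopologicalSpace.PseudoMetrizableSpace (Matrix (Fin N) (Fin N) ℝ) :=
  inferInstanceAs (TopologicalSpace.PseudoMetrizableSpace (Fin N → Fin N → ℝ))

instance aux_enm (N : ℕ) : ENormedAddMonoid (Matrix (Fin N) (Fin N) ℝ) :=
  inferInstanceAs (ENormedAddMonoid (Fin N → Fin N → ℝ))

/-- Iterated-integral formula for the Taylor coefficients of the end-point map on a
matrix group: if `ḃ^{(k)} = b^{(k)}·u + k·b^{(k−1)}·Δu`, `b⁰ = g`, `b^{(k)}(0) = 0`, and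
`J_k(t) = ∫₀ᵗ J_{k−1}(τ)·Ad_{g τ}Δu(τ) dτ` (with `J₀ = 1`) is the `k`-fold iterated
integral of the adjoint-transported perturbation, then `b^{(k)}(t) = k!·J_k(t)·g(t)`. -/
theorem stmt_5 (N : ℕ) (T : ℝ) (hT : 0 ≤ T)
    (u Δu g ginv : ℝ → Matrix (Fin N) (Fin N) ℝ)
    (b J : ℕ → ℝ → Matrix (Fin N) (Fin N) ℝ)
    (hu : ContinuousOn u (Set.Icc 0 T)) (hΔu : ContinuousOn Δu (Set.Icc 0 T))
    (hg : ∀ t ∈ Set.Icc 0 T, HasDerivAt g (g t * u t) t) (hg0 : g 0 = 1)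
    (hginv : ∀ t ∈ Set.Icc 0 T, g t * ginv t = 1 ∧ ginv t * g t = 1)
    (hb0 : ∀ t, b 0 t = g t)
    (hbinit : ∀ k, 1 ≤ k → b k 0 = 0)
    (hbODE : ∀ k, 1 ≤ k → ∀ t ∈ Set.Icc 0 T,
      HasDerivAt (fun τ => b k τ) (b k t * u t + (k : ℝ) • (b (k - 1) t * Δu t)) t)
    (hJ0 : ∀ t, J 0 t = 1)
    (hJ : ∀ k, 1 ≤ k → ∀ t,
      J k t = ∫ τ in (0:ℝ)..t, J (k - 1) τ * (g τ * Δu τ * ginv τ)) :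
    ∀ k, ∀ t ∈ Set.Icc 0 T, b k t = ((Nat.factorial k : ℕ) : ℝ) • (J k t * g t) := by
  have hIcc : Set.uIcc (0:ℝ) T = Set.Icc 0 T := Set.uIcc_of_le hT
  have hgc : ContinuousOn g (Set.Icc 0 T) := fun t ht =>
    (hg t ht).continuousAt.continuousWithinAt
  -- continuity of the inverse
  have hdet : ∀ t ∈ Set.Icc (0:ℝ) T, (g t).det ≠ 0 := by
    intro t ht
    have : IsUnit (g t) := ⟨⟨g t, ginv t, (hginv t ht).1, (hginv t ht).2⟩, rfl⟩
    exact ((Matrix.isUnit_iff_isUnit_det _).1 this).ne_zero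
  have hginvc : ContinuousOn ginv (Set.Icc 0 T) := by
    have h1 : ∀ t ∈ Set.Icc (0:ℝ) T, ginv t = (g t)⁻¹ :=
      fun t ht => (Matrix.inv_eq_right_inv (hginv t ht).1).symm
    refine ContinuousOn.congr (fun t ht => ?_) h1
    have hinv : ContinuousAt Inv.inv (g t) := by
      refine continuousAt_matrix_inv (g t) ?_
      rw [Ring.inverse_eq_inv']
      exact continuousAt_inv₀ (hdet t ht)
    exact (hinv.comp (hg t ht).continuousAt).continuousWithinAt
  -- continuity of the iterated integrals
  have hJc : ∀ k, ContinuousOn (J k) (Set.Icc 0 T) := by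
    intro k
    induction k with
    | zero => exact continuousOn_const.congr fun t _ => hJ0 t
    | succ k ih =>
      have hfc : ContinuousOn (fun τ => J k τ * (g τ * Δu τ * ginv τ)) (Set.Icc 0 T) :=
        ih.mul ((hgc.mul hΔu).mul hginvc)
      have hint : IntervalIntegrable (fun τ => J k τ * (g τ * Δu τ * ginv τ)) volume 0 T := by
        apply ContinuousOn.intervalIntegrable
        rwa [hIcc]
      have := intervalIntegral.continuousOn_primitive_interval' hint
        (by rw [hIcc]; exact Set.left_mem_Icc.2 hT)
      rw [hIcc] at this
      exact this.congr fun t _ => by simpa using hJ (k + 1) (by omega) t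
  -- derivative of the iterated integrals
  have hJ' : ∀ k, ∀ t ∈ Set.Icc (0:ℝ) T,
      HasDerivWithinAt (J (k + 1)) (J k t * (g t * Δu t * ginv t)) (Set.Icc 0 T) t := by
    intro k t ht
    haveI : Fact (t ∈ Set.Icc (0:ℝ) T) := ⟨ht⟩
    have hfc : ContinuousOn (fun τ => J k τ * (g τ * Δu τ * ginv τ)) (Set.Icc 0 T) :=
      (hJc k).mul ((hgc.mul hΔu).mul hginvc)
    have hint : IntervalIntegrable (fun τ => J k τ * (g τ * Δu τ * ginv τ)) volume 0 t := by
      apply ContinuousOn.intervalIntegrable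
      apply hfc.mono
      rw [← hIcc]
      apply Set.uIcc_subset_uIcc_left
      rw [hIcc]; exact ht
    have key := intervalIntegral.integral_hasDerivWithinAt_right (s := Set.Icc 0 T) hint
      (hfc.stronglyMeasurableAtFilter_nhdsWithin measurableSet_Icc t) (hfc t ht)
    have hfun : J (k + 1) = fun τ => ∫ x in (0:ℝ)..τ, J k x * (g x * Δu x * ginv x) := by
      funext τ
      simpa using hJ (k + 1) (by omega) τ
    rw [hfun]
    exact key
  -- bound on u
  obtain ⟨C, hC⟩ : ∃ C, ∀ x ∈ Set.Icc (0:ℝ) T, ‖u x‖ ≤ C :=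
    (isCompact_Icc).exists_bound_of_continuousOn hu
  have hC0 : 0 ≤ C := le_trans (norm_nonneg _) (hC 0 (Set.left_mem_Icc.2 hT))
  -- main induction
  intro k
  induction k with
  | zero =>
    intro t ht
    simp [hb0, hJ0]
  | succ k ih =>
    set c : ℝ := (((k + 1).factorial : ℕ) : ℝ) with hc
    set D : ℝ → Matrix (Fin N) (Fin N) ℝ := fun τ => b (k + 1) τ - c • (J (k + 1) τ * g τ)
      with hD
    have hD' : ∀ x ∈ Set.Icc (0:ℝ) T, HasDerivWithinAt D (D x * u x) (Set.Icc 0 T) x := by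
      intro x hx
      have h1 := (hbODE (k + 1) (by omega) x hx).hasDerivWithinAt (s := Set.Icc 0 T)
      have h2a : HasDerivWithinAt g (g x * u x) (Set.Icc 0 T) x := (hg x hx).hasDerivWithinAt
      have h2b := aux_hasDerivWithinAt_mul (hJ' k x hx) h2a
      have h2 := h2b.const_smul c
      have h3 := h1.sub h2
      convert h3 using 1
      · rfl
      · rfl
      · rfl
      · rfl
      rw [hD]
      simp only [Nat.add_sub_cancel]
      rw [ih x hx]
      simp only [sub_mul, smul_mul_assoc, mul_assoc, smul_add]
      rw [(hginv x hx).2]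
      simp only [mul_one]
      rw [hc]
      push_cast [Nat.factorial_succ]
      module
    have hDc : ContinuousOn D (Set.Icc 0 T) := fun x hx => (hD' x hx).continuousWithinAt
    have hD0 : D 0 = 0 := by
      rw [hD]
      simp only [hbinit (k + 1) (by omega), hJ (k + 1) (by omega) 0,
        intervalIntegral.integral_same, zero_mul, smul_zero, sub_zero]
    have hgron := norm_le_gronwallBound_of_norm_deriv_right_le (f := D)
      (f' := fun x => D x * u x) (δ := 0) (K := N * C) (ε := 0) (a := 0) (b := T) hDc
      (fun x hx => (hD' x ⟨hx.1, hx.2.le⟩).mono_of_mem_nhdsWithin (Icc_mem_nhdsGE_of_mem hx))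
      (by rw [hD0]; simp)
      (by
        intro x hx
        show ‖D x * u x‖ ≤ ↑N * C * ‖D x‖ + 0
        have h1 := aux_norm_mul (D x) (u x)
        have h2 := hC x ⟨hx.1, hx.2.le⟩
        have h3 : (0:ℝ) ≤ ‖D x‖ := norm_nonneg _
        have h4 : (0:ℝ) ≤ (N:ℝ) := by positivity
        calc ‖D x * u x‖ ≤ ↑N * ‖D x‖ * ‖u x‖ := h1
          _ ≤ ↑N * ‖D x‖ * C := mul_le_mul_of_nonneg_left h2 (mul_nonneg h4 h3)
          _ = ↑N * C * ‖D x‖ + 0 := by ring)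
    have hDzero : ∀ x ∈ Set.Icc (0:ℝ) T, D x = 0 := by
      intro x hx
      have := hgron x hx
      rw [gronwallBound_ε0_δ0] at this
      simpa [norm_le_zero_iff] using this
    intro t ht
    have := hDzero t ht
    rw [hD] at this
    have := sub_eq_zero.mp this
    simpa [hc] using this
end

section
/- Let b^{(1)}, b^{(2)} and Φ^{(1)}, Φ^{(2)} along a trajectory q(t) satisfy: ḃ^{(1)} = Σᵢ uᵢ·DXᵢ[b^{(1)}] + Σᵢ Δuᵢ·Xᵢ; ḃ^{(2)} = Σᵢ uᵢ·(DXᵢ[b^{(2)}] + (1/2)D²Xᵢ[b^{(1)},b^{(1)}]) + Σᵢ Δuᵢ·DXᵢ[b^{(1)}]; the evolution equations Φ̇^{(1)}[b] = −Σᵢ uᵢ Φ^{(1)}[DXᵢ[b]] and Φ̇^{(2)}[b,b′] = −Σᵢ uᵢ (Φ^{(1)}[D²Xᵢ[b,b′]] + Φ^{(2)}[DXᵢ[b],b′] + Φ^{(2)}[DXᵢ[b′],b]). Define q^{(1)}(t) := Φ^{(1)}(t)[b^{(1)}(t)] and q^{(2)}(t) := Φ^{(1)}(t)[b^{(2)}(t)]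 + (1/2)Φ^{(2)}(t)[b^{(1)}(t), b^{(1)}(t)]. Then q̇^{(1)}(t) = Σᵢ Δuᵢ(t)·Φ^{(1)}(t)[Xᵢ(q(t))] and q̇^{(2)}(t) = Σᵢ Δuᵢ(t)·(Φ^{(1)}(t)[DXᵢ(q(t))[b^{(1)}(t)]] + Φ^{(2)}(t)[Xᵢ(q(t)), b^{(1)}(t)]). In particular, q̇^{(1)} and q̇^{(2)} are linear in Δu and contain no explicit dependence on u. -/
/-- Degree ≤ 2 case of Theorem 3.1 (adapted coordinates): with `b¹, b²` the first two
Taylor coefficients of the end-point map and `Φ¹, Φ²` evolving by the postulated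
equations, the adapted coordinates `q¹ = Φ¹[b¹]` and `q² = Φ¹[b²] + ½Φ²[b¹,b¹]` satisfy
`q̇¹ = ∑ᵢ Δuᵢ·Φ¹[Xᵢ(q)]` and `q̇² = ∑ᵢ Δuᵢ·(Φ¹[DXᵢ(q)[b¹]] + Φ²[Xᵢ(q), b¹])`:
linear in `Δu` with no explicit dependence on `u`. -/
theorem stmt_11 (n l : ℕ) (T : ℝ) (hT : 0 ≤ T)
    (X : Fin l → (Fin n → ℝ) → (Fin n → ℝ)) (hX : ∀ i, ContDiff ℝ (⊤ : ℕ∞) (X i))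
    (u Δu : ℝ → Fin l → ℝ) (q b1 b2 : ℝ → (Fin n → ℝ))
    (Φ1 Φ1' : ℝ → (Fin n → ℝ) →L[ℝ] ℝ)
    (Φ2 Φ2' : ℝ → (Fin n → ℝ) →L[ℝ] (Fin n → ℝ) →L[ℝ] ℝ)
    (hq : ∀ t ∈ Set.Icc 0 T, HasDerivAt q (∑ i, u t i • X i (q t)) t)
    (hb1 : ∀ t ∈ Set.Icc 0 T,
      HasDerivAt b1 (∑ i, u t i • (fderiv ℝ (X i) (q t)) (b1 t) +
        ∑ i, Δu t i • X i (q t)) t)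
    (hb2 : ∀ t ∈ Set.Icc 0 T,
      HasDerivAt b2 (∑ i, u t i •
          ((fderiv ℝ (X i) (q t)) (b2 t) +
            (2⁻¹ : ℝ) • iteratedFDeriv ℝ 2 (X i) (q t) ![b1 t, b1 t]) +
        ∑ i, Δu t i • (fderiv ℝ (X i) (q t)) (b1 t)) t)
    (hΦ1 : ∀ t ∈ Set.Icc 0 T, HasDerivAt Φ1 (Φ1' t) t)
    (hΦ2 : ∀ t ∈ Set.Icc 0 T, HasDerivAt Φ2 (Φ2' t) t)
    (hΦ1' : ∀ t ∈ Set.Icc 0 T, ∀ v,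
      Φ1' t v = -∑ i, u t i * Φ1 t ((fderiv ℝ (X i) (q t)) v))
    (hΦ2' : ∀ t ∈ Set.Icc 0 T, ∀ v w,
      Φ2' t v w = -∑ i, u t i *
        (Φ1 t (iteratedFDeriv ℝ 2 (X i) (q t) ![v, w]) +
          Φ2 t ((fderiv ℝ (X i) (q t)) v) w +
          Φ2 t ((fderiv ℝ (X i) (q t)) w) v))
    (hΦ2symm : ∀ t v w, Φ2 t v w = Φ2 t w v) :
    ∀ t ∈ Set.Icc 0 T,
      HasDerivAt (fun τ => Φ1 τ (b1 τ)) (∑ i, Δu t i * Φ1 t (X i (q t))) t ∧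
      HasDerivAt (fun τ => Φ1 τ (b2 τ) + (2⁻¹ : ℝ) * Φ2 τ (b1 τ) (b1 τ))
        (∑ i, Δu t i *
          (Φ1 t ((fderiv ℝ (X i) (q t)) (b1 t)) + Φ2 t (X i (q t)) (b1 t))) t := by
  intro t ht
  have hb1t := hb1 t ht
  have hb2t := hb2 t ht
  have hP1t := hΦ1 t ht
  have hP2t := hΦ2 t ht
  constructor
  · have h := hP1t.clm_apply hb1t
    refine h.congr_deriv (Eq.symm ?_)
    rw [hΦ1' t ht]
    simp only [map_add, map_sum, map_smul, smul_eq_mul]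
    ring
  · have hA := hP1t.clm_apply hb2t
    have hB := (hP2t.clm_apply hb1t).clm_apply hb1t
    have h := hA.add (hB.const_mul (2⁻¹ : ℝ))
    refine h.congr_deriv (Eq.symm ?_)
    simp only [ContinuousLinearMap.add_apply, ContinuousLinearMap.sum_apply,
      ContinuousLinearMap.smul_apply, map_add, map_sum, map_smul, smul_eq_mul,
      hΦ1' t ht, hΦ2' t ht, Finset.sum_add_distrib, Finset.mul_sum, Finset.sum_neg_distrib,
      mul_add, hΦ2symm t (b1 t)]
    ring_nf
    have e1 : ∑ x : Fin l, 1 / 2 * u t x * ((Φ2 t) ((fderiv ℝ (X x) (q t)) (b1 t))) (b1 t)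
        = (1 / 2) * ∑ x : Fin l, u t x * ((Φ2 t) ((fderiv ℝ (X x) (q t)) (b1 t))) (b1 t) := by
      rw [Finset.mul_sum]; exact Finset.sum_congr rfl fun x _ => by ring
    have e2 : ∑ x : Fin l, 1 / 2 * Δu t x * ((Φ2 t) (X x (q t))) (b1 t)
        = (1 / 2) * ∑ x : Fin l, Δu t x * ((Φ2 t) (X x (q t))) (b1 t) := by
      rw [Finset.mul_sum]; exact Finset.sum_congr rfl fun x _ => by ring
    have e3 : ∑ x : Fin l, u t x * (Φ1 t) ((iteratedFDeriv ℝ 2 (X x) (q t)) ![b1 t, b1 t]) * (1 / 2)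
        = (∑ x : Fin l, u t x * (Φ1 t) ((iteratedFDeriv ℝ 2 (X x) (q t)) ![b1 t, b1 t])) * (1 / 2) :=
      (Finset.sum_mul ..).symm
    simp only [← Finset.sum_mul]; ring
end
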